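/- Let k ≥ 1 and 1 ≤ t ≤ k be integers, and θ ∈ ℝ with sin(jθ) ≠ 0 for all 1 ≤ j ≤ k−1. For a finite set S of positive integers with |S| = m and max(S) ≤ k+m−1, define A_S = {0,…,k+m−1} \ S, F(A) = ∏_{a<b ∈ A} sin((b−a)θ), and η_S = F(A_S)/F(A_∅); for m ≥ 1 set η_{[m]} with [m] = {1,…,m}, set η_{[0]} = 1, and set η_{[m]} = 0 for m < 0; also set η_{{0}} = 1. Let M be the t×t matrix over the polynomial ring ℝ[J, K] with entries M_{i,j} = η_{[j−i]}·K + η_{[j−i+1]}·J (so M_{i,j} = 0 for i > j+1 and M_{j+1,j} = J). Then det(M) = Σ_{s=0}^{t} η_{{s}} · J^{s} · K^{t−s}. -/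

import Mathlib

/-!
Expanding along the first row, the determinants `D_t` of the Toeplitz matrices `(a_{j-i})` with
`a_{-1} = J` and `a_m = 0` for `m < -1` satisfy `D_{t+1} = Σ_j (-1)^j a_j J^j D_{t-j}`. For
`a_m = η_{[m]} K + η_{[m+1]} J` and `D(z) = Σ D_t z^t` this recursion reads
`(1 - Kz) B(-Jz) D(z) ≡ 1` with `B(z) = Σ η_{[m]} z^m`. Hence `D(z) = C(Jz) / (1 - Kz)`, i.e.
`D_t = Σ_s η_{{s}} J^s K^{t-s}`, as soon as `B(-z) C(z) ≡ 1` for `C(z) = Σ η_{{s}} z^s`, that is,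
`Σ_e (-1)^e η_{[e]} η_{{t-e}} = 0` for `1 ≤ t ≤ k`.

The sine-Vandermonde ratios are `η_{[m]} = ∏_{j=1}^{k-1} sin((m+j)θ) / sin(jθ)` and, for
`0 < s < k`, `η_{{s}} = [k]! / ([s]! [k-s]!)` with `[n]! = ∏_{j=1}^{n} sin(jθ)`. Put `u = e^{iθ}`
and `x_r = u^{2r+1-k}` for `r < k`. A symmetric `q`-binomial theorem identifies `η_{{s}}` with the
elementary symmetric functions of the `x_r`, while `m ↦ ∏_{j=1}^{k-1} sin((m+j)θ)` is a linear
combination of the sequences `m ↦ x_r^m`. It is therefore annihilated by the recurrence with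
characteristic polynomial `∏_r (1 - x_r Y)`, and it vanishes at `m = -1, …, 1-k`; this is the
required convolution identity.
-/

/-- `sineVandermonde θ A = ∏_{a<b, a,b ∈ A} sin((b−a)θ)`. -/
noncomputable def sineVandermonde (θ : ℝ) (A : Finset ℕ) : ℝ :=
  ∏ p ∈ (A ×ˢ A).filter (fun p => p.1 < p.2), Real.sin (((p.2 - p.1 : ℕ) : ℝ) * θ)

/-- `gapSet k S = {0,1,…,k+|S|−1} \ S`. -/
def gapSet (k : ℕ) (S : Finset ℕ) : Finset ℕ :=
  Finset.range (k + S.card) \ S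

open Finset

namespace Matrix

variable {R : Type*}

def toeplitz (a : ℤ → R) (n : ℕ) : Matrix (Fin n) (Fin n) R :=
  of fun i j => a ((j : ℤ) - (i : ℤ))

theorem toeplitz_submatrix_succ_succ (a : ℤ → R) (n : ℕ) :
    (toeplitz a (n + 1)).submatrix Fin.succ Fin.succ = toeplitz a n := by
  ext i j
  simp [toeplitz]

variable [CommRing R]

theorem det_toeplitz_submatrix_succ_succAbove (a : ℤ → R) (ha : ∀ m < -1, a m = 0) :
    ∀ (n : ℕ) (j : Fin (n + 1)),
      ((toeplitz a (n + 1)).submatrix Fin.succ j.succAbove).det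
        = a (-1) ^ (j : ℕ) * (toeplitz a (n - j)).det
  | n, ⟨0, _⟩ => by
    simp [Fin.succAbove_zero, toeplitz_submatrix_succ_succ]
  | n + 1, ⟨j + 1, hj⟩ => by
    rw [det_succ_column_zero, Fintype.sum_eq_single 0]
    · have hminor : ((toeplitz a (n + 2)).submatrix Fin.succ (Fin.succAbove ⟨j + 1, hj⟩)).submatrix
          (Fin.succAbove 0) Fin.succ = (toeplitz a (n + 1)).submatrix Fin.succ
            (Fin.succAbove ⟨j, by omega⟩) := by
        rw [submatrix_submatrix, ← toeplitz_submatrix_succ_succ a (n + 1), submatrix_submatrix]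
        congr 1
        funext c
        exact Fin.succ_succAbove_succ ⟨j, by omega⟩ c
      have hcorner : (toeplitz a (n + 2)).submatrix Fin.succ (Fin.succAbove ⟨j + 1, hj⟩) 0 0
          = a (-1) := by
        simp [toeplitz]
      rw [hminor, det_toeplitz_submatrix_succ_succAbove a ha n, Nat.add_sub_add_right, hcorner,
        Fin.val_zero, pow_zero, one_mul, pow_succ', mul_assoc]
    · intro i hi
      have : a (-1 + -i) = 0 := ha _ (by have := Fin.pos_iff_ne_zero.2 hi; omega)
      simp [toeplitz, this]


theorem det_toeplitz_succ (a : ℤ → R) (ha : ∀ m < -1, a m = 0) (n : ℕ) :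
    (toeplitz a (n + 1)).det
      = ∑ j ∈ range (n + 1), (-1) ^ j * a j * (a (-1) ^ j * (toeplitz a (n - j)).det) := by
  rw [det_succ_row_zero, ← Fin.sum_univ_eq_sum_range
    (fun j => (-1) ^ j * a j * (a (-1) ^ j * (toeplitz a (n - j)).det))]
  refine sum_congr rfl fun j _ => ?_
  rw [det_toeplitz_submatrix_succ_succAbove a ha]
  simp [toeplitz]

end Matrix

section HessenbergToeplitz

variable {R : Type*} [CommRing R] (b : ℤ → R) (c : ℕ → R) (J K : R)

def binaryForm (n : ℕ) : R := ∑ s ∈ range (n + 1), c s * J ^ s * K ^ (n - s)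

open PowerSeries in
/-- With `β = Σ (-J)ʲ bⱼ zʲ`, `γ = Σ cₛ Jˢ zˢ`, `κ = Σ Kʳ zʳ`, the hypothesis says `βγ ≡ 1` up to
degree `n`, so `β (γ κ) ≡ κ`; comparing the coefficients of `zᵐ` and `zᵐ⁺¹` of `β (γ κ)` gives the
recursion, since `binaryForm` is the coefficient sequence of `γ κ`. -/
theorem binaryForm_succ (n : ℕ) (hb_zero : b 0 = 1) (hc_zero : c 0 = 1)
    (hbc : ∀ t, 1 ≤ t → t ≤ n → ∑ e ∈ range (t + 1), (-1) ^ e * b e * c (t - e) = 0)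
    {m : ℕ} (hm : m + 1 ≤ n) :
    binaryForm c J K (m + 1)
      = ∑ j ∈ range (m + 1), (-1) ^ j * (b j * K + b (j + 1) * J)
          * (J ^ j * binaryForm c J K (m - j)) := by
  set β : R⟦X⟧ := mk fun j => (-J) ^ j * b j
  set γ : R⟦X⟧ := mk fun s => c s * J ^ s
  set κ : R⟦X⟧ := mk fun r => K ^ r
  have hγκ (i : ℕ) : coeff i (γ * κ) = binaryForm c J K i := by
    rw [coeff_mul, Nat.sum_antidiagonal_eq_sum_range_succ (fun s r => coeff s γ * coeff r κ)]
    simp [γ, κ, binaryForm]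
  have hβγ (p : ℕ) :
      coeff p (β * γ) = J ^ p * ∑ e ∈ range (p + 1), (-1) ^ e * b e * c (p - e) := by
    rw [coeff_mul, Nat.sum_antidiagonal_eq_sum_range_succ (fun e s => coeff e β * coeff s γ),
      mul_sum]
    refine sum_congr rfl fun e he => ?_
    have hJ : J ^ p = J ^ e * J ^ (p - e) := by
      rw [← pow_add, Nat.add_sub_cancel' (by simpa [Nat.lt_succ_iff] using he)]
    simp only [β, γ, coeff_mk, hJ]
    ring
  have hβγκ (i : ℕ) (hi : i ≤ n) : coeff i (β * (γ * κ)) = K ^ i := by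
    rw [← mul_assoc, coeff_mul, sum_eq_single (0, i)]
    · simp [hβγ, hb_zero, hc_zero, κ]
    · rintro ⟨p, r⟩ hpr hne
      have hp : p ≠ 0 := by rintro rfl; simp_all
      have hpi : p ≤ i := by rw [HasAntidiagonal.mem_antidiagonal] at hpr; omega
      rw [hβγ, hbc p (by omega) (by omega)]
      simp
    · simp
  have hconv (i : ℕ) : coeff i (β * (γ * κ))
      = ∑ j ∈ range (i + 1), (-J) ^ j * b j * binaryForm c J K (i - j) := by
    rw [coeff_mul, Nat.sum_antidiagonal_eq_sum_range_succ (fun j r => coeff j β * coeff r (γ * κ))]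
    simp [β, hγκ]
  have hsucc := hconv (m + 1)
  rw [sum_range_succ', hβγκ (m + 1) hm] at hsucc
  simp only [pow_zero, Nat.cast_zero, hb_zero, Nat.sub_zero, mul_one, one_mul] at hsucc
  have hterm (j : ℕ) : (-1) ^ j * (b j * K + b (j + 1) * J) * (J ^ j * binaryForm c J K (m - j))
      = K * ((-J) ^ j * b j * binaryForm c J K (m - j))
        - (-J) ^ (j + 1) * b ((j + 1 : ℕ) : ℤ) * binaryForm c J K (m + 1 - (j + 1)) := by
    rw [Nat.add_sub_add_right]
    push_cast
    ring
  simp only [hterm, sum_sub_distrib, ← mul_sum, ← hconv m, hβγκ m (by omega)]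
  linear_combination -hsucc

theorem det_toeplitz_hessenberg (n : ℕ) (hb_neg : ∀ m < 0, b m = 0) (hb_zero : b 0 = 1)
    (hc_zero : c 0 = 1)
    (hbc : ∀ t, 1 ≤ t → t ≤ n → ∑ e ∈ range (t + 1), (-1) ^ e * b e * c (t - e) = 0) :
    (Matrix.toeplitz (fun m => b m * K + b (m + 1) * J) n).det = binaryForm c J K n := by
  have ha (m : ℤ) (hm : m < -1) : b m * K + b (m + 1) * J = 0 := by
    simp [hb_neg m (by omega), hb_neg (m + 1) (by omega)]
  suffices ∀ m ≤ n,
      (Matrix.toeplitz (fun m => b m * K + b (m + 1) * J) m).det = binaryForm c J K m from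
    this n le_rfl
  intro m
  induction m using Nat.strong_induction_on with
  | _ m ih =>
    rcases m with _ | m
    · simp [binaryForm, hc_zero]
    · intro hm
      rw [Matrix.det_toeplitz_succ _ ha, binaryForm_succ b c J K n hb_zero hc_zero hbc hm]
      refine sum_congr rfl fun j hj => ?_
      rw [mem_range] at hj
      rw [ih (m - j) (by omega) (by omega)]
      simp [hb_neg (-1) (by omega), hb_zero]

end HessenbergToeplitz

section QAnalogues

variable {F : Type*} [Field F] (u : F)

-- For `u = exp (θ * I)` this is `2 i sin (m θ)`.
def qSin (m : ℤ) : F := u ^ m - u ^ (-m)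

def qAscFactorial (m : ℤ) (n : ℕ) : F := ∏ j ∈ range n, qSin u (m + j)

-- The symmetric Gaussian binomial `u^{-s(n-s)} [n choose s]_{u²}`, given by its Pascal rule.
def qChoose : ℕ → ℕ → F
  | _, 0 => 1
  | 0, _ + 1 => 0
  | n + 1, s + 1 => u ^ (s + 1 : ℤ) * qChoose n (s + 1) + u ^ ((s : ℤ) - n) * qChoose n s

variable {u}

theorem qSin_zero : qSin u 0 = 0 := by simp [qSin]

theorem qSin_add (hu : u ≠ 0) (x y : ℤ) :
    u ^ x * qSin u y + u ^ (-y) * qSin u x = qSin u (x + y) := by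
  simp only [qSin, mul_sub, ← zpow_add₀ hu]
  rw [show -y + x = x + -y by ring, show -y + -x = -(x + y) by ring]
  ring

theorem qAscFactorial_succ (m : ℤ) (n : ℕ) :
    qAscFactorial u m (n + 1) = qAscFactorial u m n * qSin u (m + n) :=
  prod_range_succ _ _

@[simp]
theorem qChoose_zero_right (n : ℕ) : qChoose u n 0 = 1 := by cases n <;> rfl

theorem qChoose_succ_succ (n s : ℕ) : qChoose u (n + 1) (s + 1)
    = u ^ (s + 1 : ℤ) * qChoose u n (s + 1) + u ^ ((s : ℤ) - n) * qChoose u n s := rfl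

theorem qChoose_of_lt : ∀ {n s : ℕ}, n < s → qChoose u n s = 0
  | 0, _ + 1, _ => rfl
  | n + 1, s + 1, h => by
    rw [qChoose_succ_succ, qChoose_of_lt (by omega), qChoose_of_lt (by omega)]
    ring

@[simp]
theorem qChoose_self : ∀ n : ℕ, qChoose u n n = 1
  | 0 => rfl
  | n + 1 => by simp [qChoose_succ_succ, qChoose_of_lt, qChoose_self n]

theorem qChoose_add_mul_qAscFactorial (hu : u ≠ 0) :
    ∀ a b : ℕ, qChoose u (a + b) a * qAscFactorial u 1 a * qAscFactorial u 1 b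
      = qAscFactorial u 1 (a + b)
  | 0, b => by simp [qAscFactorial]
  | a + 1, 0 => by simp [qAscFactorial]
  | a + 1, b + 1 => by
    have ih₁ := qChoose_add_mul_qAscFactorial hu (a + 1) b
    have ih₂ := qChoose_add_mul_qAscFactorial hu a (b + 1)
    have hsin := qSin_add hu (a + 1) (b + 1)
    rw [show a + 1 + b = a + (b + 1) by omega] at ih₁
    rw [show (a : ℤ) + 1 + (b + 1) = 1 + ((a + (b + 1) : ℕ) : ℤ) by push_cast; ring] at hsin
    rw [show a + 1 + (b + 1) = a + (b + 1) + 1 by omega, qChoose_succ_succ,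
      qAscFactorial_succ _ (a + (b + 1)), ← hsin, qAscFactorial_succ _ a, qAscFactorial_succ _ b,
      show (a : ℤ) - ((a + (b + 1) : ℕ) : ℤ) = -(b + 1 : ℤ) by push_cast; ring]
    rw [qAscFactorial_succ _ b] at ih₂
    rw [qAscFactorial_succ _ a] at ih₁
    push_cast at *
    simp only [add_comm (1 : ℤ)] at *
    linear_combination (u ^ ((a : ℤ) + 1) * qSin u (b + 1)) * ih₁
      + (u ^ (-((b : ℤ) + 1)) * qSin u (a + 1)) * ih₂

theorem sum_range_qChoose_mul_pow (hu : u ≠ 0) : ∀ (n : ℕ) (Y : F),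
    ∑ s ∈ range (n + 1), (-1) ^ s * qChoose u n s * Y ^ s
      = ∏ i ∈ range n, (1 - u ^ (2 * i + 1 - n : ℤ) * Y)
  | 0, Y => by simp
  | n + 1, Y => by
    have ih := sum_range_qChoose_mul_pow hu n (u * Y)
    have hprod : ∏ i ∈ range n, (1 - u ^ (2 * ((i + 1 : ℕ) : ℤ) + 1 - ((n + 1 : ℕ) : ℤ)) * Y)
        = ∏ i ∈ range n, (1 - u ^ (2 * i + 1 - n : ℤ) * (u * Y)) := by
      refine prod_congr rfl fun i _ => ?_
      rw [show 2 * ((i + 1 : ℕ) : ℤ) + 1 - ((n + 1 : ℕ) : ℤ) = (2 * i + 1 - n : ℤ) + 1 by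
        push_cast; ring, zpow_add_one₀ hu]
      ring
    have hterm (s : ℕ) : (-1) ^ (s + 1) * qChoose u (n + 1) (s + 1) * Y ^ (s + 1)
        = (-1) ^ (s + 1) * qChoose u n (s + 1) * (u * Y) ^ (s + 1)
          - u ^ (-n : ℤ) * Y * ((-1) ^ s * qChoose u n s * (u * Y) ^ s) := by
      have e₁ : u ^ ((s : ℤ) + 1) = u ^ (s + 1) := by exact_mod_cast zpow_natCast u (s + 1)
      have e₂ : u ^ ((s : ℤ) - n) = u ^ (-n : ℤ) * u ^ s := by
        rw [sub_eq_neg_add, zpow_add₀ hu, zpow_natCast]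
      rw [qChoose_succ_succ, e₁, e₂]
      ring
    have hshift : ∑ s ∈ range (n + 1), (-1) ^ (s + 1) * qChoose u n (s + 1) * (u * Y) ^ (s + 1) + 1
        = ∑ s ∈ range (n + 1), (-1) ^ s * qChoose u n s * (u * Y) ^ s := by
      have h := sum_range_succ' (fun s => (-1) ^ s * qChoose u n s * (u * Y) ^ s) (n + 1)
      rw [sum_range_succ, qChoose_of_lt (Nat.lt_succ_self n)] at h
      simpa using h.symm
    rw [sum_range_succ', prod_range_succ', hprod, ← ih]
    simp only [hterm, sum_sub_distrib, ← mul_sum, qChoose_zero_right]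
    rw [← hshift, show 2 * ((0 : ℕ) : ℤ) + 1 - ((n + 1 : ℕ) : ℤ) = -n by push_cast; ring]
    ring

open Polynomial in
theorem exists_qAscFactorial_eq_sum_zpow (hu : u ≠ 0) (n : ℕ) :
    ∃ p : ℕ → F, ∀ m : ℤ,
      qAscFactorial u (m + 1) n = ∑ d ∈ range (n + 1), p d * (u ^ (2 * d - n : ℤ)) ^ m := by
  -- `qSin u (m + 1 + j) = u^{-m} (u^{j+1} w - u^{-(j+1)})` with `w = u^{2m}`
  set P : F[X] := ∏ j ∈ range n, (C (u ^ ((j : ℤ) + 1)) * X + C (-u ^ (-((j : ℤ) + 1))))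
  have hdeg : P.natDegree < n + 1 := by
    refine (natDegree_prod_le _ _).trans_lt ?_
    calc ∑ j ∈ range n, _ ≤ ∑ _j ∈ range n, 1 := sum_le_sum fun _ _ => natDegree_linear_le
      _ < n + 1 := by simp
  refine ⟨P.coeff, fun m => ?_⟩
  have hfactor (j : ℕ) : qSin u (m + 1 + j)
      = u ^ (-m) * (u ^ ((j : ℤ) + 1) * u ^ (2 * m) + -u ^ (-((j : ℤ) + 1))) := by
    simp only [qSin, mul_add, mul_neg, ← zpow_add₀ hu]
    rw [← sub_eq_add_neg]
    congr 2 <;> ring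
  have hsplit : qAscFactorial u (m + 1) n = (u ^ (-m)) ^ n * P.eval (u ^ (2 * m)) := by
    simp [qAscFactorial, P, eval_prod, hfactor, prod_mul_distrib]
  rw [hsplit, eval_eq_sum_range' hdeg, mul_sum]
  refine sum_congr rfl fun d _ => ?_
  rw [← zpow_natCast, ← zpow_natCast, ← zpow_mul, ← zpow_mul, ← zpow_mul, mul_left_comm,
    ← zpow_add₀ hu]
  congr 2
  ring

theorem sum_qChoose_mul_zpow_eq_zero (hu : u ≠ 0) {k d : ℕ} (hd : d < k) (t : ℤ) :
    ∑ s ∈ range (k + 1), (-1) ^ s * qChoose u k s * (u ^ (2 * d + 1 - k : ℤ)) ^ (t - s) = 0 := by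
  set x := u ^ (2 * d + 1 - k : ℤ)
  have hx : x ≠ 0 := zpow_ne_zero _ hu
  have hroot : ∑ s ∈ range (k + 1), (-1) ^ s * qChoose u k s * x⁻¹ ^ s = 0 := by
    rw [sum_range_qChoose_mul_pow hu]
    exact prod_eq_zero (mem_range.2 hd) (by simp [x, hx])
  calc _ = x ^ t * ∑ s ∈ range (k + 1), (-1) ^ s * qChoose u k s * x⁻¹ ^ s := by
        rw [mul_sum]
        refine sum_congr rfl fun s _ => ?_
        rw [zpow_sub₀ hx, zpow_natCast, inv_pow, div_eq_mul_inv]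
        ring
    _ = 0 := by rw [hroot, mul_zero]

theorem sum_qChoose_mul_qAscFactorial_eq_zero (hu : u ≠ 0) (n : ℕ) (t : ℤ) :
    ∑ s ∈ range (n + 2), (-1) ^ s * qChoose u (n + 1) s * qAscFactorial u (t - s + 1) n = 0 := by
  obtain ⟨p, hp⟩ := exists_qAscFactorial_eq_sum_zpow hu n
  simp_rw [hp, mul_sum]
  rw [sum_comm]
  refine sum_eq_zero fun d hd => ?_
  have h := sum_qChoose_mul_zpow_eq_zero hu (k := n + 1) (mem_range.1 hd) t
  push_cast at h
  rw [show (2 * d + 1 - (n + 1) : ℤ) = 2 * d - n by ring] at h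
  calc _ = p d * ∑ s ∈ range (n + 2),
        (-1) ^ s * qChoose u (n + 1) s * (u ^ (2 * d - n : ℤ)) ^ (t - s) := by
        rw [mul_sum]
        exact sum_congr rfl fun s _ => by ring
    _ = 0 := by rw [h, mul_zero]

theorem sum_range_qChoose_sub_mul_qAscFactorial_eq_zero (hu : u ≠ 0) {n t : ℕ} (ht₀ : 1 ≤ t)
    (ht : t ≤ n + 1) :
    ∑ e ∈ range (t + 1), (-1) ^ (t - e) * qChoose u (n + 1) (t - e) * qAscFactorial u (e + 1) n
      = 0 := by
  -- the terms with `s > t` vanish, as `qAscFactorial u (t - s + 1) n` contains `qSin u 0`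
  have htrunc : ∑ s ∈ range (t + 1), (-1) ^ s * qChoose u (n + 1) s * qAscFactorial u (t - s + 1) n
      = 0 := by
    rw [sum_subset (range_subset_range.2 (by omega : t + 1 ≤ n + 2)),
      sum_qChoose_mul_qAscFactorial_eq_zero hu n t]
    intro s hs hst
    simp only [mem_range, not_lt] at hs hst
    refine mul_eq_zero_of_right _ (prod_eq_zero (i := s - t - 1) (by rw [mem_range]; omega) ?_)
    rw [show (t : ℤ) - s + 1 + ((s - t - 1 : ℕ) : ℤ) = 0 by omega, qSin_zero]
  rw [← htrunc, ← sum_range_reflect]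
  refine sum_congr rfl fun e he => ?_
  rw [mem_range] at he
  rw [show t + 1 - 1 - e = t - e by omega, show t - (t - e) = e by omega, Nat.cast_sub (by omega)]

end QAnalogues

section SineVandermonde

variable (θ : ℝ)

noncomputable def sinAscFactorial (m n : ℕ) : ℝ := ∏ j ∈ range n, Real.sin (((m + j : ℕ) : ℝ) * θ)

theorem sineVandermonde_eq_prod_prod (A : Finset ℕ) :
    sineVandermonde θ A
      = ∏ a ∈ A, ∏ b ∈ A, if a < b then Real.sin (((b - a : ℕ) : ℝ) * θ) else 1 := by
  rw [sineVandermonde, prod_filter, prod_product]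

theorem sineVandermonde_insert {c : ℕ} {A : Finset ℕ} (hc : c ∉ A) :
    sineVandermonde θ (insert c A)
      = (∏ a ∈ A with a < c, Real.sin (((c - a : ℕ) : ℝ) * θ))
        * (∏ b ∈ A with c < b, Real.sin (((b - c : ℕ) : ℝ) * θ)) * sineVandermonde θ A := by
  simp only [sineVandermonde_eq_prod_prod, prod_insert hc, lt_irrefl, if_false, one_mul,
    prod_mul_distrib, prod_ite, prod_const_one, mul_one]
  ring

theorem sineVandermonde_map_addRight (A : Finset ℕ) (m : ℕ) :
    sineVandermonde θ (A.map (addRightEmbedding m)) = sineVandermonde θ A := by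
  simp only [sineVandermonde_eq_prod_prod, prod_map, addRightEmbedding_apply, add_lt_add_iff_right,
    Nat.add_sub_add_right]

theorem sineVandermonde_insert_zero_map (e n : ℕ) :
    sineVandermonde θ (insert 0 ((range n).map (addRightEmbedding (e + 1))))
      = sinAscFactorial θ (e + 1) n * sineVandermonde θ (range n) := by
  rw [sineVandermonde_insert θ (by simp), sineVandermonde_map_addRight,
    filter_false_of_mem (by simp), filter_true_of_mem (by simp), prod_empty, one_mul, prod_map]
  congr 1
  refine prod_congr rfl fun j _ => ?_
  simp [add_comm]

theorem sineVandermonde_range_succ (n : ℕ) :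
    sineVandermonde θ (range (n + 1)) = sinAscFactorial θ 1 n * sineVandermonde θ (range n) := by
  rw [range_add_one', ← sineVandermonde_insert_zero_map θ 0 n]
  rfl

theorem gapSet_Icc_one (k e : ℕ) (hk : 1 ≤ k) :
    gapSet k (Icc 1 e) = insert 0 ((range (k - 1)).map (addRightEmbedding (e + 1))) := by
  ext x
  simp only [gapSet, Nat.card_Icc, mem_sdiff, mem_range, mem_Icc, mem_insert, mem_map,
    addRightEmbedding_apply]
  constructor
  · rintro ⟨h1, h2⟩
    rcases Nat.eq_zero_or_pos x with h | h
    · exact Or.inl h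
    · exact Or.inr ⟨x - (e + 1), by omega, by omega⟩
  · rintro (rfl | ⟨a, ha, rfl⟩) <;> omega

theorem sineVandermonde_range_succ_eq_gapSet_singleton (k s : ℕ) (hs : s ≤ k) :
    sineVandermonde θ (range (k + 1))
      = sinAscFactorial θ 1 s * sinAscFactorial θ 1 (k - s) * sineVandermonde θ (gapSet k {s}) := by
  have hgap : gapSet k {s} = (range (k + 1)).erase s := by
    rw [gapSet, card_singleton, sdiff_singleton_eq_erase]
  have hlt : {a ∈ (range (k + 1)).erase s | a < s} = range s := by
    ext a
    simp only [mem_filter, mem_erase, mem_range]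
    omega
  have hgt : {a ∈ (range (k + 1)).erase s | s < a} = Ico (s + 1) (k + 1) := by
    ext a
    simp only [mem_filter, mem_erase, mem_range, mem_Ico]
    omega
  conv_lhs => rw [← insert_erase (mem_range.2 (Nat.lt_succ_of_le hs))]
  rw [hgap, sineVandermonde_insert θ (notMem_erase s _), hlt, hgt,
    prod_Ico_eq_prod_range, ← prod_range_reflect, Nat.add_sub_add_right, sinAscFactorial,
    sinAscFactorial]
  congr 2
  · refine prod_congr rfl fun j hj => ?_
    rw [mem_range] at hj
    rw [show s - (s - 1 - j) = 1 + j by omega]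
  · refine prod_congr rfl fun j _ => ?_
    rw [show s + 1 + j - s = 1 + j by omega]

theorem gapSet_empty (k : ℕ) : gapSet k ∅ = range k := by simp [gapSet]

theorem gapSet_singleton_self (k : ℕ) : gapSet k {k} = range k := by
  ext x
  simp only [gapSet, card_singleton, mem_sdiff, mem_range, mem_singleton]
  omega

-- `η_{[m]}` and `η_{{s}}` of the statement, for `m, s ≥ 0`.
noncomputable def etaInterval (k m : ℕ) : ℝ :=
  sineVandermonde θ (gapSet k (Icc 1 m)) / sineVandermonde θ (gapSet k ∅)

noncomputable def etaSingleton (k s : ℕ) : ℝ :=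
  if s = 0 then 1 else sineVandermonde θ (gapSet k {s}) / sineVandermonde θ (gapSet k ∅)

variable {θ} {k : ℕ} (hθ : ∀ j : ℕ, 1 ≤ j → j ≤ k - 1 → Real.sin (j * θ) ≠ 0)
include hθ

theorem sinAscFactorial_one_ne_zero {n : ℕ} (hn : n ≤ k - 1) : sinAscFactorial θ 1 n ≠ 0 :=
  prod_ne_zero_iff.2 fun j hj => hθ _ (by omega) (by rw [mem_range] at hj; omega)

theorem sineVandermonde_range_ne_zero : ∀ {n : ℕ}, n ≤ k → sineVandermonde θ (range n) ≠ 0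
  | 0, _ => by simp [sineVandermonde]
  | n + 1, h => by
    rw [sineVandermonde_range_succ]
    exact mul_ne_zero (sinAscFactorial_one_ne_zero hθ (by omega))
      (sineVandermonde_range_ne_zero (by omega))

theorem etaInterval_zero : etaInterval θ k 0 = 1 := by
  rw [etaInterval, show Icc 1 0 = ∅ by rfl, gapSet_empty]
  exact div_self (sineVandermonde_range_ne_zero hθ le_rfl)

theorem etaInterval_eq_div (hk : 1 ≤ k) (e : ℕ) :
    etaInterval θ k e = sinAscFactorial θ (e + 1) (k - 1) / sinAscFactorial θ 1 (k - 1) := by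
  obtain ⟨n, rfl⟩ : ∃ n, k = n + 1 := ⟨k - 1, by omega⟩
  rw [etaInterval, gapSet_Icc_one _ _ hk, gapSet_empty, sineVandermonde_insert_zero_map,
    sineVandermonde_range_succ, Nat.add_sub_cancel,
    mul_div_mul_right _ _ (sineVandermonde_range_ne_zero hθ (by omega))]

theorem etaSingleton_mul_sinAscFactorial {s : ℕ} (hs₀ : 1 ≤ s) (hs : s ≤ k) :
    etaSingleton θ k s * sinAscFactorial θ 1 s * sinAscFactorial θ 1 (k - s)
      = sinAscFactorial θ 1 k := by
  have h := sineVandermonde_range_succ_eq_gapSet_singleton θ k s hs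
  rw [sineVandermonde_range_succ] at h
  have hne := sineVandermonde_range_ne_zero hθ (le_refl k)
  rw [etaSingleton, if_neg (by omega), gapSet_empty]
  field_simp
  linear_combination -h

theorem etaSingleton_self (hk : 1 ≤ k) : etaSingleton θ k k = 1 := by
  rw [etaSingleton, if_neg (by omega), gapSet_singleton_self, gapSet_empty]
  exact div_self (sineVandermonde_range_ne_zero hθ le_rfl)

end SineVandermonde

open Complex

section Transfer

variable {θ : ℝ}

theorem ofReal_sin_mul_two_I (x : ℕ) :
    (Real.sin (x * θ) : ℂ) * (2 * I) = qSin (exp (θ * I)) x := by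
  rw [qSin, ← exp_int_mul, ← exp_int_mul, ofReal_sin, sin]
  push_cast
  ring_nf
  rw [I_sq]
  ring_nf

theorem ofReal_sinAscFactorial_mul (m n : ℕ) :
    (sinAscFactorial θ m n : ℂ) * (2 * I) ^ n = qAscFactorial (exp (θ * I)) m n := by
  rw [sinAscFactorial, qAscFactorial, ofReal_prod,
    show (2 * I) ^ n = ∏ _j ∈ range n, 2 * I by simp, ← prod_mul_distrib]
  refine prod_congr rfl fun j _ => ?_
  rw [ofReal_sin_mul_two_I]
  push_cast
  rfl

theorem ofReal_sinAscFactorial_one_mul (n : ℕ) :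
    (sinAscFactorial θ 1 n : ℂ) * (2 * I) ^ n = qAscFactorial (exp (θ * I)) 1 n := by
  simpa using ofReal_sinAscFactorial_mul (θ := θ) 1 n

variable {k : ℕ} (hθ : ∀ j : ℕ, 1 ≤ j → j ≤ k - 1 → Real.sin (j * θ) ≠ 0)
include hθ

theorem qAscFactorial_exp_one_ne_zero {n : ℕ} (hn : n ≤ k - 1) :
    qAscFactorial (exp (θ * I)) 1 n ≠ 0 := by
  rw [← ofReal_sinAscFactorial_one_mul]
  exact mul_ne_zero (ofReal_ne_zero.2 (sinAscFactorial_one_ne_zero hθ hn))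
    (pow_ne_zero _ (by simp))

theorem ofReal_etaInterval (hk : 1 ≤ k) (e : ℕ) :
    (etaInterval θ k e : ℂ)
      = qAscFactorial (exp (θ * I)) (e + 1) (k - 1) / qAscFactorial (exp (θ * I)) 1 (k - 1) := by
  rw [etaInterval_eq_div hθ hk, ofReal_div,
    ← mul_div_mul_right _ _ (pow_ne_zero (k - 1) (by simp : (2 * I : ℂ) ≠ 0)),
    ofReal_sinAscFactorial_mul, ofReal_sinAscFactorial_one_mul]
  push_cast
  rfl

theorem ofReal_etaSingleton {s : ℕ} (hs : s ≤ k) :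
    (etaSingleton θ k s : ℂ) = qChoose (exp (θ * I)) k s := by
  rcases Nat.eq_zero_or_pos s with rfl | hs₀
  · simp [etaSingleton]
  rcases hs.eq_or_lt with rfl | hsk
  · simp [etaSingleton_self hθ hs₀]
  have hreal : (etaSingleton θ k s : ℂ) * sinAscFactorial θ 1 s * sinAscFactorial θ 1 (k - s)
      = sinAscFactorial θ 1 k := by
    exact_mod_cast etaSingleton_mul_sinAscFactorial hθ hs₀ hs
  have hq := qChoose_add_mul_qAscFactorial (exp_ne_zero (θ * I)) s (k - s)
  rw [Nat.add_sub_cancel' hs] at hq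
  have hne : qAscFactorial (exp (θ * I)) 1 s * qAscFactorial (exp (θ * I)) 1 (k - s) ≠ 0 :=
    mul_ne_zero (qAscFactorial_exp_one_ne_zero hθ (by omega))
      (qAscFactorial_exp_one_ne_zero hθ (by omega))
  refine mul_right_cancel₀ hne ?_
  calc _ = (etaSingleton θ k s : ℂ) * sinAscFactorial θ 1 s * sinAscFactorial θ 1 (k - s)
          * ((2 * I) ^ s * (2 * I) ^ (k - s)) := by
        rw [← ofReal_sinAscFactorial_one_mul, ← ofReal_sinAscFactorial_one_mul]
        ring
    _ = sinAscFactorial θ 1 k * (2 * I) ^ k := by rw [hreal, ← pow_add, Nat.add_sub_cancel' hs]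
    _ = _ := by rw [ofReal_sinAscFactorial_one_mul, ← hq, mul_assoc]

theorem sum_etaInterval_mul_etaSingleton {t : ℕ} (ht : 1 ≤ t) (htk : t ≤ k) :
    ∑ e ∈ range (t + 1), (-1) ^ e * etaInterval θ k e * etaSingleton θ k (t - e) = 0 := by
  obtain ⟨n, rfl⟩ : ∃ n, k = n + 1 := ⟨k - 1, by omega⟩
  set u := exp (θ * I)
  have hsign (e : ℕ) (he : e ≤ t) : ((-1) ^ e : ℂ) = (-1) ^ t * (-1) ^ (t - e) := by
    rw [← pow_add, show t + (t - e) = e + 2 * (t - e) by omega, pow_add, pow_mul]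
    simp
  suffices h : ((∑ e ∈ range (t + 1), (-1) ^ e * etaInterval θ (n + 1) e
      * etaSingleton θ (n + 1) (t - e) : ℝ) : ℂ) = 0 by exact_mod_cast h
  push_cast
  calc _ = (-1) ^ t / qAscFactorial u 1 n * ∑ e ∈ range (t + 1), (-1) ^ (t - e)
        * qChoose u (n + 1) (t - e) * qAscFactorial u (e + 1) n := by
        rw [mul_sum]
        refine sum_congr rfl fun e he => ?_
        rw [ofReal_etaInterval hθ (by omega), ofReal_etaSingleton hθ (by omega),
          hsign e (by rw [mem_range] at he; omega)]
        push_cast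
        ring
    _ = 0 := by rw [sum_range_qChoose_sub_mul_qAscFactorial_eq_zero (exp_ne_zero _) ht htk,
      mul_zero]

end Transfer

open MvPolynomial in
theorem toeplitz_det_orbifold_ptolemy_general (k t : ℕ) (ht2 : t ≤ k) (θ : ℝ)
    (hθ : ∀ j : ℕ, 1 ≤ j → j ≤ k - 1 → Real.sin ((j : ℝ) * θ) ≠ 0)
    (ηI : ℤ → ℝ)
    (hηI : ∀ m : ℤ, ηI m = if m < 0 then 0 else
      sineVandermonde θ (gapSet k (Finset.Icc 1 m.toNat)) / sineVandermonde θ (gapSet k ∅))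
    (ηS : ℕ → ℝ)
    (hηS : ∀ s : ℕ, ηS s = if s = 0 then 1 else
      sineVandermonde θ (gapSet k {s}) / sineVandermonde θ (gapSet k ∅))
    (M : Matrix (Fin t) (Fin t) (MvPolynomial (Fin 2) ℝ))
    (hM : ∀ i j : Fin t, M i j =
      MvPolynomial.C (ηI ((j : ℤ) - (i : ℤ))) * MvPolynomial.X 1
        + MvPolynomial.C (ηI ((j : ℤ) - (i : ℤ) + 1)) * MvPolynomial.X 0) :
    M.det = ∑ s ∈ Finset.range (t + 1),
      MvPolynomial.C (ηS s) * MvPolynomial.X 0 ^ s * MvPolynomial.X 1 ^ (t - s) := by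
  have hηS' : ηS = etaSingleton θ k := funext hηS
  have hηI_nat (e : ℕ) : ηI e = etaInterval θ k e := by
    rw [hηI, if_neg (by omega), Int.toNat_natCast]
    rfl
  have hM' : M = Matrix.toeplitz (fun m => C (ηI m) * X 1 + C (ηI (m + 1)) * X 0) t :=
    Matrix.ext hM
  subst hM' hηS'
  refine det_toeplitz_hessenberg (fun m => C (ηI m)) (fun s => C (etaSingleton θ k s)) (X 0) (X 1)
    t (fun m hm => by simp [hηI m, hm]) ?_ (by simp [etaSingleton]) fun t' ht' ht't => ?_
  · simpa using congrArg (C (σ := Fin 2)) ((hηI_nat 0).trans (etaInterval_zero hθ))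
  · have key := congrArg (C (σ := Fin 2)) (sum_etaInterval_mul_etaSingleton hθ ht' (ht't.trans ht2))
    simp_rw [← hηI_nat] at key
    simpa using key

open MvPolynomial in
/-- Toeplitz–Hessenberg determinant evaluation underlying the SL_k higher orbifold
Ptolemy relation: the determinant of the `t×t` matrix with entries
`η_{[j−i]}·K + η_{[j−i+1]}·J` (over `ℝ[J,K]`, with `J = X 0`, `K = X 1`) equals
`Σ_{s=0}^{t} η_{{s}} J^s K^{t−s}`. -/
theorem toeplitz_det_orbifold_ptolemy (k t : ℕ) (hk : 1 ≤ k) (ht1 : 1 ≤ t)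
    (ht2 : t ≤ k) (θ : ℝ)
    (hθ : ∀ j : ℕ, 1 ≤ j → j ≤ k - 1 → Real.sin ((j : ℝ) * θ) ≠ 0)
    (ηI : ℤ → ℝ)
    (hηI : ∀ m : ℤ, ηI m = if m < 0 then 0 else
      sineVandermonde θ (gapSet k (Finset.Icc 1 m.toNat)) / sineVandermonde θ (gapSet k ∅))
    (ηS : ℕ → ℝ)
    (hηS : ∀ s : ℕ, ηS s = if s = 0 then 1 else
      sineVandermonde θ (gapSet k {s}) / sineVandermonde θ (gapSet k ∅))
    (M : Matrix (Fin t) (Fin t) (MvPolynomial (Fin 2) ℝ))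
    (hM : ∀ i j : Fin t, M i j =
      MvPolynomial.C (ηI ((j : ℤ) - (i : ℤ))) * MvPolynomial.X 1
        + MvPolynomial.C (ηI ((j : ℤ) - (i : ℤ) + 1)) * MvPolynomial.X 0) :
    M.det = ∑ s ∈ Finset.range (t + 1),
      MvPolynomial.C (ηS s) * MvPolynomial.X 0 ^ s * MvPolynomial.X 1 ^ (t - s) :=
  toeplitz_det_orbifold_ptolemy_general k t ht2 θ hθ ηI hηI ηS hηS M hM
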